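/- Let T be the d-regular rooted tree, D ≥ 1, and P ≤ Aut(T^D) a minimal pattern subgroup with group of finite type G_P. Then for every n ≥ D, |π_n(G_P)| = |P| · |St_P(D−1)|^{d + d² + ⋯ + d^{n−D}}, where St_P(D−1) = π_D(St_{G_P}(D−1)). Consequently, the Hausdorff dimension of G_P is ℋ(G_P) = (1/d^{D−1}) · log|St_P(D−1)| / log(d!). -/

import Mathlib

namespace TreeFT

/-- Vertices of the `d`-regular rooted tree: finite words over `Fin d`. -/
abbrev Vertex (d : ℕ) := List (Fin d)

/-- The automorphism group of the `d`-regular rooted tree, realized as the subgroup of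
permutations of the vertex set that preserve length (levels) and prefixes (adjacency). -/
def treeAut (d : ℕ) : Subgroup (Equiv.Perm (Vertex d)) where
  carrier := {g | (∀ v : Vertex d, (g v).length = v.length) ∧
      (∀ v w : Vertex d, (g (v ++ w)).take v.length = g v)}
  one_mem' := ⟨fun _ => rfl, fun v w => List.take_left⟩
  mul_mem' := by
    rintro g h ⟨hg1, hg2⟩ ⟨hh1, hh2⟩
    refine ⟨fun v => by rw [Equiv.Perm.mul_apply, hg1, hh1], fun v w => ?_⟩
    have h1 : h (v ++ w) = h v ++ (h (v ++ w)).drop v.length := by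
      conv_lhs => rw [← List.take_append_drop v.length (h (v ++ w))]
      rw [hh2]
    rw [Equiv.Perm.mul_apply, Equiv.Perm.mul_apply, h1]
    have h2 : v.length = (h v).length := (hh1 v).symm
    rw [h2]
    exact hg2 _ _
  inv_mem' := by
    rintro g ⟨hg1, hg2⟩
    constructor
    · intro v
      have h := hg1 (g⁻¹ v)
      rw [(Equiv.Perm.eq_inv_iff_eq.mp rfl)] at h
      exact h.symm
    · intro v w
      apply g.injective
      have hlen : v.length ≤ (g⁻¹ (v ++ w)).length := by
        have h := hg1 (g⁻¹ (v ++ w))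
        rw [(Equiv.Perm.eq_inv_iff_eq.mp rfl)] at h
        rw [← h, List.length_append]
        exact Nat.le_add_right _ _
      have h3 := hg2 ((g⁻¹ (v ++ w)).take v.length) ((g⁻¹ (v ++ w)).drop v.length)
      rw [List.take_append_drop, (Equiv.Perm.eq_inv_iff_eq.mp rfl), List.length_take,
        min_eq_left hlen, List.take_left] at h3
      rw [← h3, (Equiv.Perm.eq_inv_iff_eq.mp rfl)]

variable {d : ℕ}

/-- `Aut(T)` as a type. -/
abbrev TAut (d : ℕ) := ↥(treeAut d)

lemma length_apply (g : TAut d) (v : Vertex d) :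
    ((g : Equiv.Perm (Vertex d)) v).length = v.length := g.2.1 v

lemma take_apply (g : TAut d) (v w : Vertex d) :
    ((g : Equiv.Perm (Vertex d)) (v ++ w)).take v.length = (g : Equiv.Perm (Vertex d)) v :=
  g.2.2 v w

lemma apply_append (g : TAut d) (v w : Vertex d) :
    (g : Equiv.Perm (Vertex d)) (v ++ w) =
      (g : Equiv.Perm (Vertex d)) v ++ ((g : Equiv.Perm (Vertex d)) (v ++ w)).drop v.length := by
  conv_lhs => rw [← List.take_append_drop v.length ((g : Equiv.Perm (Vertex d)) (v ++ w))]
  rw [take_apply]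

/-- The section `g|_v` of a tree automorphism at the vertex `v`. -/
def sect (g : TAut d) (v : Vertex d) : TAut d :=
  ⟨{ toFun := fun w => ((g : Equiv.Perm (Vertex d)) (v ++ w)).drop v.length
     invFun := fun w =>
       (((g : Equiv.Perm (Vertex d)))⁻¹ ((g : Equiv.Perm (Vertex d)) v ++ w)).drop v.length
     left_inv := by
       intro w
       show ((g : Equiv.Perm (Vertex d))⁻¹
         ((g : Equiv.Perm (Vertex d)) v ++
           ((g : Equiv.Perm (Vertex d)) (v ++ w)).drop v.length)).drop v.length = w
       rw [← apply_append g v w, (Equiv.Perm.inv_eq_iff_eq.mpr rfl), List.drop_left]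
     right_inv := by
       intro w
       show ((g : Equiv.Perm (Vertex d))
         (v ++ ((g : Equiv.Perm (Vertex d))⁻¹
           ((g : Equiv.Perm (Vertex d)) v ++ w)).drop v.length)).drop v.length = w
       have h2 := apply_append g⁻¹ ((g : Equiv.Perm (Vertex d)) v) w
       simp only [InvMemClass.coe_inv] at h2
       rw [(Equiv.Perm.inv_eq_iff_eq.mpr rfl), length_apply] at h2
       rw [← h2, (Equiv.Perm.eq_inv_iff_eq.mp rfl), ← length_apply g v, List.drop_left] },
   by
    constructor
    · intro w
      simp only [Equiv.coe_fn_mk, List.length_drop, length_apply, List.length_append]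
      omega
    · intro w u
      simp only [Equiv.coe_fn_mk]
      rw [← List.append_assoc]
      have h0 : ((g : Equiv.Perm (Vertex d)) ((v ++ w) ++ u)).take (v ++ w).length
          = (g : Equiv.Perm (Vertex d)) (v ++ w) := take_apply g (v ++ w) u
      have h1 : w.length = (v.length + w.length) - v.length := by omega
      rw [h1, ← List.drop_take, ← List.length_append, h0]⟩

lemma sect_apply (g : TAut d) (v w : Vertex d) :
    ((sect g v : TAut d) : Equiv.Perm (Vertex d)) w
      = ((g : Equiv.Perm (Vertex d)) (v ++ w)).drop v.length := rfl

lemma sect_mul (g h : TAut d) (v : Vertex d) :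
    sect (g * h) v = sect g ((h : Equiv.Perm (Vertex d)) v) * sect h v := by
  apply Subtype.ext
  apply Equiv.ext
  intro w
  simp only [MulMemClass.coe_mul, Equiv.Perm.mul_apply, sect_apply]
  rw [← apply_append h v w, length_apply]

lemma sect_one (v : Vertex d) : sect (1 : TAut d) v = 1 := by
  apply Subtype.ext
  apply Equiv.ext
  intro w
  simp only [sect_apply, OneMemClass.coe_one, Equiv.Perm.coe_one, id_eq]
  exact List.drop_left

end TreeFT
namespace TreeFT

variable {d : ℕ}

/-- The stabilizer `St(n)` of the `n`-th level: automorphisms acting trivially on the first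
`n` levels of the tree. -/
def lst (d n : ℕ) : Subgroup (TAut d) where
  carrier := {g | ∀ v : Vertex d, v.length ≤ n → (g : Equiv.Perm (Vertex d)) v = v}
  one_mem' := fun _ _ => rfl
  mul_mem' := by
    intro g h hg hh v hv
    show (g : Equiv.Perm (Vertex d)) ((h : Equiv.Perm (Vertex d)) v) = v
    rw [hh v hv, hg v hv]
  inv_mem' := by
    intro g hg v hv
    show ((g : Equiv.Perm (Vertex d)))⁻¹ v = v
    apply (g : Equiv.Perm (Vertex d)).injective
    rw [(Equiv.Perm.eq_inv_iff_eq.mp rfl), hg v hv]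

lemma mem_lst {g : TAut d} {n : ℕ} :
    g ∈ lst d n ↔ ∀ v : Vertex d, v.length ≤ n → (g : Equiv.Perm (Vertex d)) v = v :=
  Iff.rfl

instance lst_normal (d n : ℕ) : (lst d n).Normal := by
  constructor
  intro s hs g v hv
  show (g : Equiv.Perm (Vertex d))
    ((s : Equiv.Perm (Vertex d)) (((g : Equiv.Perm (Vertex d)))⁻¹ v)) = v
  have h1 : ((g⁻¹ : TAut d) : Equiv.Perm (Vertex d)) v = ((g : Equiv.Perm (Vertex d)))⁻¹ v := by
    simp
  have h2 : (((g : Equiv.Perm (Vertex d)))⁻¹ v).length ≤ n := by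
    rw [← h1, length_apply]; exact hv
  rw [hs _ h2, (Equiv.Perm.eq_inv_iff_eq.mp rfl)]

/-- `Aut(T^n)`, the automorphism group of the finite tree consisting of the first `n` levels,
realized as the quotient of `Aut(T)` by the `n`-th level stabilizer. -/
abbrev FAut (d n : ℕ) := TAut d ⧸ lst d n

/-- `π_n : Aut(T) → Aut(T^n)`, restriction to the first `n` levels. -/
def proj (d n : ℕ) : TAut d →* FAut d n := QuotientGroup.mk' (lst d n)

lemma proj_surjective (d n : ℕ) : Function.Surjective (proj d n) :=
  QuotientGroup.mk'_surjective _

/-- The group of finite type `G_P` of depth `D` with pattern group `P ≤ Aut(T^D)`: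
all tree automorphisms whose section at every vertex acts on the first `D` levels as an
element of `P`. -/
def gft (d D : ℕ) (P : Subgroup (FAut d D)) : Subgroup (TAut d) where
  carrier := {g | ∀ v : Vertex d, proj d D (sect g v) ∈ P}
  one_mem' := by
    intro v
    rw [sect_one, map_one]
    exact one_mem P
  mul_mem' := by
    intro g h hg hh v
    rw [sect_mul, map_mul]
    exact mul_mem (hg _) (hh _)
  inv_mem' := by
    intro g hg v
    have h2 : sect g (((g⁻¹ : TAut d) : Equiv.Perm (Vertex d)) v) * sect g⁻¹ v = 1 := by
      rw [← sect_mul, mul_inv_cancel, sect_one]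
    have h3 : sect g⁻¹ v = (sect g (((g⁻¹ : TAut d) : Equiv.Perm (Vertex d)) v))⁻¹ :=
      (inv_eq_of_mul_eq_one_right h2).symm
    rw [h3, map_inv]
    exact inv_mem (hg _)

lemma mem_gft {g : TAut d} {D : ℕ} {P : Subgroup (FAut d D)} :
    g ∈ gft d D P ↔ ∀ v : Vertex d, proj d D (sect g v) ∈ P := Iff.rfl

/-- `P ≤ Aut(T^D)` is a minimal pattern subgroup if `π_D(G_P) = P`. -/
def IsMinimalPattern (d D : ℕ) (P : Subgroup (FAut d D)) : Prop :=
  (gft d D P).map (proj d D) = P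

/-- A subgroup of `Aut(T)` is level-transitive if it acts transitively on every level. -/
def LevelTransitive (H : Subgroup (TAut d)) : Prop :=
  ∀ v w : Vertex d, v.length = w.length → ∃ g ∈ H, (g : Equiv.Perm (Vertex d)) v = w

/-- A subgroup of `Aut(T)` is self-similar if it contains all sections of its elements. -/
def SelfSimilar (H : Subgroup (TAut d)) : Prop :=
  ∀ g ∈ H, ∀ v : Vertex d, sect g v ∈ H

/-- A subgroup of `Aut(T)` is fractal if it is self-similar, level-transitive, and for every
vertex `v` the section map maps the stabilizer of `v` onto the whole group. -/
def Fractal (H : Subgroup (TAut d)) : Prop :=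
  SelfSimilar H ∧ LevelTransitive H ∧
    ∀ v : Vertex d, ∀ h ∈ H, ∃ k ∈ H, (k : Equiv.Perm (Vertex d)) v = v ∧ sect k v = h

/-- The geometric product `K_n` of `K` at level `n`: elements of `St(n)` all of whose sections
at level-`n` vertices lie in `K`. -/
def geom (K : Subgroup (TAut d)) (n : ℕ) : Subgroup (TAut d) where
  carrier := {g | g ∈ lst d n ∧ ∀ v : Vertex d, v.length = n → sect g v ∈ K}
  one_mem' := ⟨one_mem _, fun v _ => by rw [sect_one]; exact one_mem K⟩
  mul_mem' := by
    rintro g h ⟨hg1, hg2⟩ ⟨hh1, hh2⟩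
    refine ⟨mul_mem hg1 hh1, fun v hv => ?_⟩
    rw [sect_mul, hh1 v hv.le]
    exact mul_mem (hg2 v hv) (hh2 v hv)
  inv_mem' := by
    rintro g ⟨hg1, hg2⟩
    refine ⟨inv_mem hg1, fun v hv => ?_⟩
    have hfix : ((g⁻¹ : TAut d) : Equiv.Perm (Vertex d)) v = v :=
      (inv_mem hg1 : g⁻¹ ∈ lst d n) v hv.le
    have h2 : sect g v * sect g⁻¹ v = 1 := by
      have := sect_mul g g⁻¹ v
      rw [mul_inv_cancel, sect_one, hfix] at this
      exact this.symm
    rw [(inv_eq_of_mul_eq_one_right h2).symm]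
    exact inv_mem (hg2 v hv)

end TreeFT
namespace TreeFT

variable {d : ℕ}

/-- The congruence topology on `Aut(T)`: the topology of pointwise convergence on the vertex
set (each vertex set carrying the discrete topology); the level stabilizers `St(n)` form a
base of neighborhoods of the identity for it. -/
instance tautTopologicalSpace (d : ℕ) : TopologicalSpace (TAut d) :=
  TopologicalSpace.induced
    (fun g : TAut d => ((g : Equiv.Perm (Vertex d)) : Vertex d → Vertex d))
    (@Pi.topologicalSpace (Vertex d) (fun _ => Vertex d) (fun _ => ⊥))

lemma isOpen_eval (d : ℕ) (v u : Vertex d) :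
    IsOpen {g : TAut d | (g : Equiv.Perm (Vertex d)) v = u} := by
  letI : TopologicalSpace (Vertex d) := ⊥
  haveI : DiscreteTopology (Vertex d) := ⟨rfl⟩
  have h : IsOpen ((fun f : Vertex d → Vertex d => f v) ⁻¹' {u}) :=
    (continuous_apply (A := fun _ : Vertex d => Vertex d) v).isOpen_preimage ({u} : Set (Vertex d)) (isOpen_discrete _)
  exact isOpen_induced h

lemma isOpen_eval_mem (d : ℕ) (v : Vertex d) (s : Set (Vertex d)) :
    IsOpen {g : TAut d | (g : Equiv.Perm (Vertex d)) v ∈ s} := by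
  have h : {g : TAut d | (g : Equiv.Perm (Vertex d)) v ∈ s}
      = ⋃ u ∈ s, {g : TAut d | (g : Equiv.Perm (Vertex d)) v = u} := by
    ext g; simp
  rw [h]
  exact isOpen_biUnion fun u _ => isOpen_eval d v u

lemma continuous_into_vertex {X : Type*} [TopologicalSpace X] (f : X → Vertex d)
    (h : ∀ u : Vertex d, IsOpen (f ⁻¹' {u})) :
    @Continuous X (Vertex d) _ ⊥ f := by
  rw [continuous_def]
  intro s _
  have hs : f ⁻¹' s = ⋃ u ∈ s, f ⁻¹' {u} := by
    ext x; simp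
  rw [hs]
  exact isOpen_biUnion fun u _ => h u

instance tautContinuousMul (d : ℕ) : ContinuousMul (TAut d) := by
  constructor
  · -- continuity of multiplication
    apply continuous_induced_rng.2
    apply @continuous_pi _ _ _ _ (fun _ => (⊥ : TopologicalSpace (Vertex d)))
    intro v
    apply continuous_into_vertex
      (f := fun p : TAut d × TAut d => ((p.1 * p.2 : TAut d) : Equiv.Perm (Vertex d)) v)
    intro u
    have h : (fun p : TAut d × TAut d =>
          ((p.1 * p.2 : TAut d) : Equiv.Perm (Vertex d)) v) ⁻¹' {u}
        = ⋃ w : Vertex d, ({g : TAut d | (g : Equiv.Perm (Vertex d)) w = u} ×ˢ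
            {h : TAut d | (h : Equiv.Perm (Vertex d)) v = w}) := by
      ext p
      simp only [Set.mem_preimage, Set.mem_singleton_iff, Set.mem_iUnion, Set.mem_prod,
        Set.mem_setOf_eq]
      constructor
      · intro hp
        exact ⟨(p.2 : Equiv.Perm (Vertex d)) v, hp, rfl⟩
      · rintro ⟨w, hw1, hw2⟩
        show (p.1 : Equiv.Perm (Vertex d)) ((p.2 : Equiv.Perm (Vertex d)) v) = u
        rw [hw2]; exact hw1
    rw [h]
    exact isOpen_iUnion fun w => (isOpen_eval d w u).prod (isOpen_eval d v w)

instance tautContinuousInv (d : ℕ) : ContinuousInv (TAut d) := by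
  constructor
  · -- continuity of inversion
    apply continuous_induced_rng.2
    apply @continuous_pi _ _ _ _ (fun _ => (⊥ : TopologicalSpace (Vertex d)))
    intro v
    apply continuous_into_vertex
      (f := fun g : TAut d => ((g⁻¹ : TAut d) : Equiv.Perm (Vertex d)) v)
    intro u
    have h : (fun g : TAut d => ((g⁻¹ : TAut d) : Equiv.Perm (Vertex d)) v) ⁻¹' {u}
        = {g : TAut d | (g : Equiv.Perm (Vertex d)) u = v} := by
      ext g
      simp only [Set.mem_preimage, Set.mem_singleton_iff, Set.mem_setOf_eq,
        InvMemClass.coe_inv]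
      constructor
      · intro hg; rw [← hg, (Equiv.Perm.eq_inv_iff_eq.mp rfl)]
      · intro hg; rw [← hg, (Equiv.Perm.inv_eq_iff_eq.mpr rfl)]
    rw [h]
    exact isOpen_eval d u v

instance tautTopologicalGroup (d : ℕ) : IsTopologicalGroup (TAut d) := ⟨⟩

/-- A subgroup of `Aut(T)` (viewed as a topological group with the congruence topology) is
topologically finitely generated if it contains a finitely generated dense subgroup. -/
def TopFG (H : Subgroup (TAut d)) : Prop :=
  ∃ S : Set ↥H, S.Finite ∧ Dense ((Subgroup.closure S : Subgroup ↥H) : Set ↥H)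

/-- A profinite group is just-infinite if it is infinite and every nontrivial closed normal
subgroup has finite index. -/
def JustInfinite (H : Subgroup (TAut d)) : Prop :=
  Infinite ↥H ∧ ∀ N : Subgroup ↥H, N.Normal → IsClosed (N : Set ↥H) → N ≠ ⊥ → N.index ≠ 0

/-- A profinite group is strongly complete if every subgroup of finite index is open. -/
def StronglyComplete (H : Subgroup (TAut d)) : Prop :=
  ∀ N : Subgroup ↥H, N.index ≠ 0 → IsOpen (N : Set ↥H)

end TreeFT

namespace TreeFT

open Filter

/-- The Hausdorff dimension of a (closed) subgroup `H ≤ Aut(T)`: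
`ℋ(H) = liminf_n log|π_n(H)| / log|π_n(Aut(T))|`. -/
noncomputable def hausdorffDim (d : ℕ) (H : Subgroup (TAut d)) : ℝ :=
  liminf (fun n : ℕ =>
    Real.log (Nat.card ↥(H.map (proj d n))) / Real.log (Nat.card (FAut d n))) atTop

/-- `St_P(D-1) = π_D(St_{G_P}(D-1))`. -/
def stP (d D : ℕ) (P : Subgroup (FAut d D)) : Subgroup (FAut d D) :=
  (gft d D P ⊓ lst d (D - 1)).map (proj d D)

end TreeFT

/-!
The kernel of `π_{n+1}(G_P) → π_n(G_P)` is `π_{n+1}(G_P ∩ St(n))`. Writing `n + 1 = m + D`,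
an element of `G_P ∩ St(m + D - 1)` is determined modulo `St(m + D)` by the depth-`D`
restrictions of its sections at the `d^m` vertices of level `m`, and these lie in
`St_P(D - 1)`. Conversely, as membership in `G_P` is a local condition, any family of elements
of `St_P(D - 1)` is realised by gluing elements of `G_P ∩ St(D - 1)` below the vertices of
level `m`. So every new level multiplies
`|π_n(G_P)|` by `|St_P(D - 1)|^(d^(n + 1 - D))`, starting from `|π_D(G_P)| = |P|`. Since
`log |Aut(T^n)| = (1 + d + ⋯ + d^(n-1)) log d!` and
`d^(D-1) (d + ⋯ + d^(n-D)) = (1 + ⋯ + d^(n-1)) - (1 + ⋯ + d^(D-1))`, the ratio of logarithms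
converges to `log |St_P(D - 1)| / (d^(D-1) log d!)`.
-/

namespace TreeFT

open Filter

variable {d : ℕ}

section Portrait

/-- The action of the automorphism that permutes the children of each vertex `v` by `p v`. -/
def portFun (p : Vertex d → Equiv.Perm (Fin d)) : Vertex d → Vertex d
  | [] => []
  | a :: w => p [] a :: portFun (fun v => p (a :: v)) w

@[simp] lemma portFun_nil (p : Vertex d → Equiv.Perm (Fin d)) : portFun p [] = [] := rfl

@[simp] lemma portFun_cons (p : Vertex d → Equiv.Perm (Fin d)) (a : Fin d) (w : Vertex d) :
    portFun p (a :: w) = p [] a :: portFun (fun v => p (a :: v)) w := rfl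

@[simp] lemma length_portFun (p : Vertex d → Equiv.Perm (Fin d)) (v : Vertex d) :
    (portFun p v).length = v.length := by
  induction v generalizing p with
  | nil => rfl
  | cons a w ih => simp [ih]

lemma portFun_congr {p q : Vertex d → Equiv.Perm (Fin d)} (v : Vertex d)
    (h : ∀ u : Vertex d, u.length < v.length → p u = q u) : portFun p v = portFun q v := by
  induction v generalizing p q with
  | nil => rfl
  | cons a w ih =>
    rw [portFun_cons, portFun_cons, h [] (by simp),
      ih fun u hu => h (a :: u) (by simpa using hu)]

lemma portFun_append (p : Vertex d → Equiv.Perm (Fin d)) (v w : Vertex d) :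
    portFun p (v ++ w) = portFun p v ++ portFun (fun u => p (v ++ u)) w := by
  induction v generalizing p with
  | nil => simp
  | cons a v ih => simp [ih]

lemma portFun_injective (p : Vertex d → Equiv.Perm (Fin d)) :
    Function.Injective (portFun p) := by
  intro v w h
  induction v generalizing p w with
  | nil => simpa [eq_comm] using congrArg List.length h
  | cons a v ih =>
    cases w with
    | nil => simpa using congrArg List.length h
    | cons b w =>
      simp only [portFun_cons, List.cons.injEq] at h
      obtain rfl : a = b := (p []).injective h.1
      rw [ih _ h.2]

lemma portFun_surjective (p : Vertex d → Equiv.Perm (Fin d)) :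
    Function.Surjective (portFun p) := by
  intro u
  induction u generalizing p with
  | nil => exact ⟨[], rfl⟩
  | cons b u ih =>
    obtain ⟨w, hw⟩ := ih fun v => p ((p [])⁻¹ b :: v)
    exact ⟨(p [])⁻¹ b :: w, by simpa using hw⟩

noncomputable def portAut (p : Vertex d → Equiv.Perm (Fin d)) : TAut d :=
  ⟨Equiv.ofBijective (portFun p) ⟨portFun_injective p, portFun_surjective p⟩,
    length_portFun p, fun v w => by
      change (portFun p (v ++ w)).take v.length = portFun p v
      rw [portFun_append, ← length_portFun p v, List.take_left]⟩

@[simp] lemma portAut_apply (p : Vertex d → Equiv.Perm (Fin d)) (v : Vertex d) :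
    ((portAut p : TAut d) : Equiv.Perm (Vertex d)) v = portFun p v := rfl

lemma apply_nil (g : TAut d) : (g : Equiv.Perm (Vertex d)) [] = [] :=
  List.length_eq_zero_iff.mp (length_apply g [])

lemma apply_singleton_eq_getD (g : TAut d) (a : Fin d) :
    (g : Equiv.Perm (Vertex d)) [a] = [((g : Equiv.Perm (Vertex d)) [a]).getD 0 a] := by
  obtain ⟨b, hb⟩ := List.length_eq_one_iff.mp (length_apply g [a])
  simp [hb]

-- `getD` never falls back to its default: `g [a]` has length one.
noncomputable def rootPerm (g : TAut d) : Equiv.Perm (Fin d) where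
  toFun a := ((g : Equiv.Perm (Vertex d)) [a]).getD 0 a
  invFun a := (((g : Equiv.Perm (Vertex d)))⁻¹ [a]).getD 0 a
  left_inv a := by
    change (((g : Equiv.Perm (Vertex d)))⁻¹
        [((g : Equiv.Perm (Vertex d)) [a]).getD 0 a]).getD 0 _ = a
    rw [← apply_singleton_eq_getD g a, Equiv.Perm.coe_inv, Equiv.symm_apply_apply]
    rfl
  right_inv a := by
    have h : ((g : Equiv.Perm (Vertex d)))⁻¹ [a]
        = [(((g : Equiv.Perm (Vertex d)))⁻¹ [a]).getD 0 a] := by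
      simpa using apply_singleton_eq_getD g⁻¹ a
    change ((g : Equiv.Perm (Vertex d))
        [(((g : Equiv.Perm (Vertex d)))⁻¹ [a]).getD 0 a]).getD 0 _ = a
    rw [← h, Equiv.Perm.coe_inv, Equiv.apply_symm_apply]
    rfl

lemma apply_singleton (g : TAut d) (a : Fin d) :
    (g : Equiv.Perm (Vertex d)) [a] = [rootPerm g a] := apply_singleton_eq_getD g a

/-- The portrait of `g`: the permutation by which `g` moves the children of each vertex. -/
noncomputable def portrait (g : TAut d) (v : Vertex d) : Equiv.Perm (Fin d) :=
  rootPerm (sect g v)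

lemma sect_nil (g : TAut d) : sect g [] = g := by
  ext w
  simp [sect_apply]

lemma sect_sect (g : TAut d) (u w : Vertex d) : sect (sect g u) w = sect g (u ++ w) := by
  ext x
  simp [sect_apply, List.drop_drop]

lemma portrait_sect (g : TAut d) (u w : Vertex d) :
    portrait (sect g u) w = portrait g (u ++ w) := by
  rw [portrait, sect_sect, portrait]

@[simp] lemma portrait_one (v : Vertex d) : portrait (1 : TAut d) v = 1 := by
  ext a
  simp [portrait, sect_one, rootPerm]

lemma apply_append_singleton (g : TAut d) (v : Vertex d) (a : Fin d) :
    (g : Equiv.Perm (Vertex d)) (v ++ [a])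
      = (g : Equiv.Perm (Vertex d)) v ++ [portrait g v a] := by
  rw [apply_append g v [a], ← sect_apply, apply_singleton, portrait]

lemma apply_eq_portFun (g : TAut d) (v : Vertex d) :
    (g : Equiv.Perm (Vertex d)) v = portFun (portrait g) v := by
  induction v generalizing g with
  | nil => simp [apply_nil]
  | cons a w ih =>
    rw [← List.singleton_append, apply_append g [a] w, apply_singleton, ← sect_apply,
      ih (sect g [a])]
    simp only [portFun_cons, List.singleton_append, List.cons.injEq]
    refine ⟨by rw [portrait, sect_nil], portFun_congr w fun u _ => ?_⟩
    rw [portrait_sect, List.singleton_append]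

lemma portrait_injective : Function.Injective (portrait (d := d)) := by
  intro g h hgh
  ext v
  rw [apply_eq_portFun g v, apply_eq_portFun h v, hgh]

lemma portrait_portAut (p : Vertex d → Equiv.Perm (Fin d)) : portrait (portAut p) = p := by
  funext v
  refine Equiv.ext fun a => ?_
  have h := apply_append_singleton (portAut p) v a
  rw [portAut_apply, portAut_apply, portFun_append] at h
  simpa [eq_comm] using List.append_cancel_left h

lemma portAut_portrait (g : TAut d) : portAut (portrait g) = g :=
  portrait_injective (portrait_portAut _)

lemma sect_portAut (p : Vertex d → Equiv.Perm (Fin d)) (u : Vertex d) :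
    sect (portAut p) u = portAut fun w => p (u ++ w) := by
  apply portrait_injective
  funext w
  rw [portrait_sect, portrait_portAut, portrait_portAut]

end Portrait

section Truncation

lemma proj_eq_proj_iff {N : ℕ} {g h : TAut d} :
    proj d N g = proj d N h ↔
      ∀ v : Vertex d, v.length ≤ N →
        (g : Equiv.Perm (Vertex d)) v = (h : Equiv.Perm (Vertex d)) v := by
  rw [proj, QuotientGroup.mk'_apply, QuotientGroup.mk'_apply, QuotientGroup.eq]
  refine forall₂_congr fun v _ => ?_
  simp [Equiv.eq_symm_apply, eq_comm]

lemma proj_eq_one_iff {N : ℕ} {g : TAut d} : proj d N g = 1 ↔ g ∈ lst d N :=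
  QuotientGroup.eq_one_iff g

lemma proj_eq_proj_iff_portrait {N : ℕ} {g h : TAut d} :
    proj d N g = proj d N h ↔
      ∀ v : Vertex d, v.length < N → portrait g v = portrait h v := by
  rw [proj_eq_proj_iff]
  constructor
  · intro H v hv
    refine Equiv.ext fun a => ?_
    have hg := apply_append_singleton g v a
    rw [H v hv.le, H (v ++ [a]) (by simpa using hv), apply_append_singleton] at hg
    simpa using (List.append_cancel_left hg).symm
  · intro H v hv
    rw [apply_eq_portFun g, apply_eq_portFun h]
    exact portFun_congr v fun u hu => H u (hu.trans_le hv)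

lemma mem_lst_iff_portrait {N : ℕ} {g : TAut d} :
    g ∈ lst d N ↔ ∀ v : Vertex d, v.length < N → portrait g v = 1 := by
  rw [← proj_eq_one_iff, ← map_one (proj d N), proj_eq_proj_iff_portrait]
  simp

instance fintypeLevel (m : ℕ) : Fintype {v : Vertex d // v.length = m} :=
  inferInstanceAs (Fintype (List.Vector (Fin d) m))

lemma card_level (m : ℕ) : Nat.card {v : Vertex d // v.length = m} = d ^ m := by
  rw [Nat.card_eq_fintype_card]
  exact (card_vector m).trans (by rw [Fintype.card_fin])

def belowEquiv (n : ℕ) :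
    {v : Vertex d // v.length < n} ≃ Σ i : Fin n, {v : Vertex d // v.length = (i : ℕ)} where
  toFun x := ⟨⟨x.1.length, x.2⟩, ⟨x.1, rfl⟩⟩
  invFun x := ⟨x.2.1, x.2.2.trans_lt x.1.2⟩
  left_inv _ := rfl
  right_inv := by
    rintro ⟨⟨i, hi⟩, v, hv⟩
    refine Sigma.ext (Fin.ext hv) ((Subtype.heq_iff_coe_eq fun w => ?_).mpr rfl)
    change w.length = v.length ↔ w.length = i
    rw [hv]

instance fintypeBelow (n : ℕ) : Fintype {v : Vertex d // v.length < n} :=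
  Fintype.ofEquiv _ (belowEquiv n).symm

lemma card_below (n : ℕ) :
    Nat.card {v : Vertex d // v.length < n} = ∑ i ∈ Finset.range n, d ^ i := by
  rw [Nat.card_congr (belowEquiv n), Nat.card_eq_fintype_card, Fintype.card_sigma,
    ← Fin.sum_univ_eq_sum_range]
  simp_rw [← Nat.card_eq_fintype_card, card_level]

noncomputable def truncEquiv (d n : ℕ) :
    FAut d n ≃ ({v : Vertex d // v.length < n} → Equiv.Perm (Fin d)) where
  toFun x v := portrait x.out v.1
  invFun q := proj d n (portAut fun v => if h : v.length < n then q ⟨v, h⟩ else 1)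
  left_inv x := by
    conv_rhs => rw [← QuotientGroup.out_eq' x]
    refine proj_eq_proj_iff_portrait.mpr fun v hv => ?_
    simp [portrait_portAut, hv]
  right_inv q := by
    funext v
    set p : Vertex d → Equiv.Perm (Fin d) :=
      fun v => if h : v.length < n then q ⟨v, h⟩ else 1
    have h := proj_eq_proj_iff_portrait.mp (QuotientGroup.out_eq' (proj d n (portAut p))) v.1 v.2
    simp only at h ⊢
    rw [h, portrait_portAut]
    exact dif_pos v.2

instance finiteFAut (d n : ℕ) : Finite (FAut d n) :=
  Finite.of_equiv _ (truncEquiv d n).symm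

lemma card_FAut (d n : ℕ) :
    Nat.card (FAut d n) = Nat.factorial d ^ (∑ i ∈ Finset.range n, d ^ i) := by
  rw [Nat.card_congr (truncEquiv d n), Nat.card_fun, card_below, Nat.card_perm, Nat.card_fin]

end Truncation

section LevelStabilizers

lemma lst_antitone {n k : ℕ} (h : n ≤ k) : lst d k ≤ lst d n :=
  fun _ hg v hv => hg v (hv.trans h)

lemma sect_mem_gft {D : ℕ} {P : Subgroup (FAut d D)} {g : TAut d}
    (hg : g ∈ gft d D P) (v : Vertex d) : sect g v ∈ gft d D P := fun u => by
  rw [sect_sect]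
  exact hg (v ++ u)

lemma sect_mem_lst {n : ℕ} {g : TAut d} (hg : g ∈ lst d n) (v : Vertex d) :
    sect g v ∈ lst d (n - v.length) := by
  intro w hw
  by_cases hvn : v.length ≤ n
  · rw [sect_apply, hg (v ++ w) (by simp; omega), List.drop_left]
  · rw [List.length_eq_zero_iff.mp (by omega : w.length = 0)]
    exact apply_nil _

lemma apply_append_of_mem_lst {m : ℕ} {g : TAut d} (hg : g ∈ lst d m) {v : Vertex d}
    (hv : v.length ≤ m) (u : Vertex d) :
    (g : Equiv.Perm (Vertex d)) (v ++ u) = v ++ (sect g v : Equiv.Perm (Vertex d)) u := by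
  rw [apply_append, hg v hv, sect_apply]

lemma mem_lst_add {m k : ℕ} {g : TAut d} (hg : g ∈ lst d m)
    (hsect : ∀ v : Vertex d, v.length = m → sect g v ∈ lst d k) : g ∈ lst d (m + k) := by
  intro w hw
  by_cases hwm : w.length ≤ m
  · exact hg w hwm
  have hv : (w.take m).length = m := by simp; omega
  rw [← List.take_append_drop m w, apply_append_of_mem_lst hg hv.le,
    hsect _ hv _ (by simp; omega)]

lemma mem_gft_of_sect {m D : ℕ} {P : Subgroup (FAut d D)} {g : TAut d}
    (hg : g ∈ lst d (m + D - 1))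
    (hsect : ∀ v : Vertex d, v.length = m → sect g v ∈ gft d D P) : g ∈ gft d D P := by
  intro u
  by_cases hum : m ≤ u.length
  · rw [← List.take_append_drop m u, ← sect_sect]
    exact hsect _ (by simp; omega) _
  · rw [proj_eq_one_iff.mpr (lst_antitone (by omega) (sect_mem_lst hg u))]
    exact one_mem P

lemma exists_mem_lst_sect_eq (m : ℕ) (k : Vertex d → TAut d) :
    ∃ g ∈ lst d m, ∀ v : Vertex d, v.length = m → sect g v = k v := by
  let p : Vertex d → Equiv.Perm (Fin d) := fun u =>
    if m ≤ u.length then portrait (k (u.take m)) (u.drop m) else 1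
  refine ⟨portAut p, mem_lst_iff_portrait.mpr fun u hu => ?_, fun v hv => ?_⟩
  · simp [portrait_portAut, p, hu]
  · conv_rhs => rw [← portAut_portrait (k v)]
    rw [sect_portAut]
    congr 1
    funext w
    simp [p, hv, List.take_left', List.drop_left']

lemma proj_sect_eq_of_proj_eq {m D : ℕ} {g h : TAut d}
    (H : proj d (m + D) g = proj d (m + D) h) {v : Vertex d} (hv : v.length = m) :
    proj d D (sect g v) = proj d D (sect h v) :=
  proj_eq_proj_iff.mpr fun w hw => by
    rw [sect_apply, sect_apply, proj_eq_proj_iff.mp H (v ++ w) (by simp; omega)]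

lemma proj_eq_of_proj_sect_eq {m D : ℕ} {g h : TAut d} (hg : g ∈ lst d m) (hh : h ∈ lst d m)
    (H : ∀ v : Vertex d, v.length = m → proj d D (sect g v) = proj d D (sect h v)) :
    proj d (m + D) g = proj d (m + D) h := by
  refine proj_eq_proj_iff.mpr fun w hw => ?_
  by_cases hwm : w.length ≤ m
  · rw [hg w hwm, hh w hwm]
  have hv : (w.take m).length = m := by simp; omega
  rw [← List.take_append_drop m w, apply_append_of_mem_lst hg hv.le,
    apply_append_of_mem_lst hh hv.le, proj_eq_proj_iff.mp (H _ hv) _ (by simp; omega)]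

end LevelStabilizers

section Counting

noncomputable def projStep (d n : ℕ) : FAut d (n + 1) →* FAut d n :=
  QuotientGroup.lift (lst d (n + 1)) (proj d n)
    fun _ hg => proj_eq_one_iff.mpr (lst_antitone n.le_succ hg)

lemma projStep_comp_proj (n : ℕ) : (projStep d n).comp (proj d (n + 1)) = proj d n := rfl

lemma card_map_proj_succ (H : Subgroup (TAut d)) (n : ℕ) :
    Nat.card (H.map (proj d (n + 1)))
      = Nat.card (H.map (proj d n)) * Nat.card ((H ⊓ lst d n).map (proj d (n + 1))) := by
  set A := H.map (proj d (n + 1))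
  let f : A →* FAut d n := (projStep d n).comp A.subtype
  have hrange : f.range = H.map (proj d n) := by
    rw [MonoidHom.range_comp, Subgroup.range_subtype, Subgroup.map_map, projStep_comp_proj]
  have hker : f.ker = ((H ⊓ lst d n).map (proj d (n + 1))).subgroupOf A := by
    ext ⟨x, hx⟩
    obtain ⟨g, hg, rfl⟩ := Subgroup.mem_map.mp hx
    simp only [MonoidHom.mem_ker, Subgroup.mem_subgroupOf, f, MonoidHom.comp_apply,
      Subgroup.coe_subtype]
    change proj d n g = 1 ↔ _
    constructor
    · exact fun h1 => Subgroup.mem_map_of_mem _ ⟨hg, proj_eq_one_iff.mp h1⟩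
    · rintro ⟨g', hg', hgg'⟩
      rw [← projStep_comp_proj, MonoidHom.comp_apply, ← hgg', ← MonoidHom.comp_apply,
        projStep_comp_proj]
      exact proj_eq_one_iff.mpr hg'.2
  rw [← Subgroup.card_mul_index f.ker, Subgroup.index_ker, hrange, hker, mul_comm,
    Nat.card_congr (Subgroup.subgroupOfEquivOfLe (Subgroup.map_mono inf_le_left)).toEquiv]

lemma card_map_proj_gft_inf_lst {D : ℕ} (P : Subgroup (FAut d D)) (hD : 1 ≤ D) (m : ℕ) :
    Nat.card ((gft d D P ⊓ lst d (m + D - 1)).map (proj d (m + D)))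
      = Nat.card (stP d D P) ^ d ^ m := by
  set S := gft d D P ⊓ lst d (m + D - 1)
  have sect_mem_stP : ∀ g ∈ S, ∀ v : Vertex d, v.length = m →
      proj d D (sect g v) ∈ stP d D P := by
    intro g hg v hv
    have hlst := sect_mem_lst hg.2 v
    rw [hv, show m + D - 1 - m = D - 1 by omega] at hlst
    exact Subgroup.mem_map_of_mem _ ⟨sect_mem_gft hg.1 v, hlst⟩
  choose rep hrepS hrep using fun x : S.map (proj d (m + D)) => Subgroup.mem_map.mp x.2
  let F : S.map (proj d (m + D)) → ({v : Vertex d // v.length = m} → stP d D P) :=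
    fun x v => ⟨proj d D (sect (rep x) v), sect_mem_stP _ (hrepS x) v v.2⟩
  have hF : Function.Bijective F := by
    refine ⟨fun x y hxy => Subtype.ext ?_, fun t => ?_⟩
    · rw [← hrep x, ← hrep y]
      refine proj_eq_of_proj_sect_eq (lst_antitone (by omega) (hrepS x).2)
        (lst_antitone (by omega) (hrepS y).2) fun v hv => ?_
      exact congrArg Subtype.val (congrFun hxy ⟨v, hv⟩)
    choose k hkS hk using fun v : {v : Vertex d // v.length = m} => Subgroup.mem_map.mp (t v).2
    obtain ⟨g, hg, hgk⟩ := exists_mem_lst_sect_eq m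
      fun v => if hv : v.length = m then k ⟨v, hv⟩ else 1
    have hgS : g ∈ S := by
      have hglst : g ∈ lst d (m + D - 1) := by
        rw [show m + D - 1 = m + (D - 1) by omega]
        exact mem_lst_add hg fun v hv => by rw [hgk v hv, dif_pos hv]; exact (hkS _).2
      refine ⟨mem_gft_of_sect hglst fun v hv => ?_, hglst⟩
      rw [hgk v hv, dif_pos hv]
      exact (hkS _).1
    refine ⟨⟨proj d (m + D) g, Subgroup.mem_map_of_mem _ hgS⟩,
      funext fun v => Subtype.ext ?_⟩
    change proj d D (sect (rep _) v) = t v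
    rw [proj_sect_eq_of_proj_eq (hrep _) v.2, hgk v v.2, dif_pos v.2, hk]
  rw [Nat.card_eq_of_bijective F hF, Nat.card_fun, card_level]

lemma card_map_proj_gft {D : ℕ} (P : Subgroup (FAut d D)) (hD : 1 ≤ D)
    (hmin : IsMinimalPattern d D P) {n : ℕ} (hn : D ≤ n) :
    Nat.card ((gft d D P).map (proj d n))
      = Nat.card P * Nat.card (stP d D P) ^ (∑ i ∈ Finset.Icc 1 (n - D), d ^ i) := by
  induction n, hn using Nat.le_induction with
  | base => rw [hmin]; simp
  | succ n hn ih =>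
    have hlayer := card_map_proj_gft_inf_lst P hD (n + 1 - D)
    rw [show n + 1 - D + D - 1 = n by omega, show n + 1 - D + D = n + 1 by omega] at hlayer
    rw [card_map_proj_succ, ih, hlayer, mul_assoc, ← pow_add, show n + 1 - D = n - D + 1 by omega,
      Finset.sum_Icc_succ_top (by omega)]

end Counting

section HausdorffDimension

lemma sum_range_pow_eq_pow_mul_sum_Icc_add (d : ℕ) {D n : ℕ} (hD : 1 ≤ D) (hn : D ≤ n) :
    ∑ i ∈ Finset.range n, d ^ i
      = d ^ (D - 1) * ∑ i ∈ Finset.Icc 1 (n - D), d ^ i + ∑ i ∈ Finset.range D, d ^ i := by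
  induction n, hn using Nat.le_induction with
  | base => simp
  | succ n hn ih =>
    rw [Finset.sum_range_succ, ih, show n + 1 - D = n - D + 1 by omega,
      Finset.sum_Icc_succ_top (by omega), mul_add, ← pow_add,
      show D - 1 + (n - D + 1) = n by omega]
    ring

lemma log_card_FAut (d n : ℕ) :
    Real.log (Nat.card (FAut d n))
      = ((∑ i ∈ Finset.range n, d ^ i : ℕ) : ℝ) * Real.log (Nat.factorial d) := by
  rw [card_FAut, Nat.cast_pow, Real.log_pow]

-- Here `log |Aut(T^n)| = 0`, so every term of the `liminf` is `x / 0 = 0`.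
lemma hausdorffDim_of_le_one (hd : d ≤ 1) (H : Subgroup (TAut d)) : hausdorffDim d H = 0 := by
  simp [hausdorffDim, log_card_FAut, Nat.factorial_eq_one.mpr hd]

lemma tendsto_log_card_FAut (hd : 2 ≤ d) :
    Tendsto (fun n => Real.log (Nat.card (FAut d n))) atTop atTop := by
  have hlog : 0 < Real.log (Nat.factorial d) :=
    Real.log_pos (by exact_mod_cast Nat.one_lt_factorial.mpr hd)
  refine tendsto_atTop_mono (fun n => ?_)
    (tendsto_natCast_atTop_atTop.atTop_mul_const hlog)
  rw [log_card_FAut]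
  gcongr
  simpa using Finset.card_nsmul_le_sum (Finset.range n) (d ^ ·) 1
    fun i _ => Nat.one_le_pow _ _ (by omega)

lemma hausdorffDim_eq_of_log_card_eq (H : Subgroup (TAut d)) {α β : ℝ}
    (hAut : Tendsto (fun n => Real.log (Nat.card (FAut d n))) atTop atTop)
    (hH : ∀ᶠ n in atTop, Real.log (Nat.card (H.map (proj d n)))
      = α * Real.log (Nat.card (FAut d n)) + β) :
    hausdorffDim d H = α := by
  have hlim : Tendsto (fun n => α + β / Real.log (Nat.card (FAut d n))) atTop (nhds α) := by
    simpa using tendsto_const_nhds.add (hAut.const_div_atTop β)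
  refine Tendsto.liminf_eq (hlim.congr' ?_)
  filter_upwards [hH, hAut.eventually_gt_atTop 0] with n hn hpos
  rw [hn]
  field_simp

lemma hausdorffDim_gft (hd : 2 ≤ d) {D : ℕ} (hD : 1 ≤ D) {P : Subgroup (FAut d D)}
    (hmin : IsMinimalPattern d D P) :
    hausdorffDim d (gft d D P)
      = (1 / (d : ℝ) ^ (D - 1)) *
          (Real.log (Nat.card (stP d D P)) / Real.log (Nat.factorial d)) := by
  have hlog : 0 < Real.log (Nat.factorial d) :=
    Real.log_pos (by exact_mod_cast Nat.one_lt_factorial.mpr hd)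
  have hP : 0 < Nat.card P := Nat.card_pos
  have hst : 0 < Nat.card (stP d D P) := Nat.card_pos
  refine hausdorffDim_eq_of_log_card_eq _ (tendsto_log_card_FAut hd)
    (β := Real.log (Nat.card P) - (∑ i ∈ Finset.range D, d ^ i : ℕ) *
      Real.log (Nat.card (stP d D P)) / (d : ℝ) ^ (D - 1)) ?_
  filter_upwards [eventually_ge_atTop D] with n hn
  rw [card_map_proj_gft P hD hmin hn, log_card_FAut, sum_range_pow_eq_pow_mul_sum_Icc_add d hD hn,
    Nat.cast_mul, Real.log_mul (by positivity) (by positivity), Nat.cast_pow, Real.log_pow]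
  push_cast
  field_simp
  ring

end HausdorffDimension

/-- Let `P ≤ Aut(T^D)` be a minimal pattern subgroup with group of finite
type `G_P`.  Then `|π_n(G_P)| = |P|·|St_P(D−1)|^{d + d² + ⋯ + d^{n−D}}` for all `n ≥ D`, and
consequently `ℋ(G_P) = (1/d^{D−1})·log|St_P(D−1)|/log(d!)`. -/
theorem statement_12 (d D : ℕ) (hD : 1 ≤ D) (P : Subgroup (FAut d D))
    (hmin : IsMinimalPattern d D P) :
    (∀ n : ℕ, D ≤ n →
      Nat.card ↥((gft d D P).map (proj d n))
        = Nat.card ↥P * Nat.card ↥(stP d D P) ^ (∑ i ∈ Finset.Icc 1 (n - D), d ^ i)) ∧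
    hausdorffDim d (gft d D P)
      = (1 / (d : ℝ) ^ (D - 1)) *
          (Real.log (Nat.card ↥(stP d D P)) / Real.log (Nat.factorial d)) := by
  refine ⟨fun n hn => card_map_proj_gft P hD hmin hn, ?_⟩
  rcases le_or_gt d 1 with hd | hd
  · rw [hausdorffDim_of_le_one hd, Nat.factorial_eq_one.mpr hd, Nat.cast_one, Real.log_one,
      div_zero, mul_zero]
  · exact hausdorffDim_gft hd hD hmin
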